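/- Let κ₁, κ₂ > 0 and ξ ∈ L¹(ℝ, ℂ). Define ν₁(t) = ξ(t) − κ₁ ∫_{−∞}^{t} e^{−((κ₁+κ₂)/2)(t − r)} ξ(r) dr and ν₂(t) = −√(κ₁κ₂) ∫_{−∞}^{t} e^{−((κ₁+κ₂)/2)(t − r)} ξ(r) dr. Then ν₁, ν₂ ∈ L¹(ℝ, ℂ) and for every ω ∈ ℝ: ∫ e^{−iωt} ν₁(t) dt = ((iω − (κ₁−κ₂)/2)/(iω + (κ₁+κ₂)/2)) · ∫ e^{−iωt} ξ(t) dt and ∫ e^{−iωt} ν₂(t) dt = (−√(κ₁κ₂)/(iω + (κ₁+κ₂)/2)) · ∫ e^{−iωt} ξ(t) dt. -/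

import Mathlib

open MeasureTheory Complex
open scoped Convolution

/-!
Both outputs are affine in `F := ξ ⋆ k`, where `k t = 𝟙[t ≥ 0] e^{-ct}` with `c = (κ₁ + κ₂)/2`
is the impulse response of the damped mode. Since `Re c > 0`, `k` is integrable with transform
`(c + iω)⁻¹`, so `F` is integrable and the convolution theorem gives
`F̂(ω) = ξ̂(ω) / (c + iω)`; the two multipliers then follow by algebra.
-/

noncomputable section

/-- The Fourier transform in the angular-frequency convention `∫ e^{-iωt} f t dt`;
Mathlib's `𝓕` uses `e^{-2πiwt}`, so this is `𝓕 f (ω / 2π)`. -/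
def angularFourier (f : ℝ → ℂ) (ω : ℝ) : ℂ :=
  ∫ t : ℝ, cexp (-(I * ω * t)) * f t

theorem angularFourier_eq_fourier (f : ℝ → ℂ) (ω : ℝ) :
    angularFourier f ω = FourierTransform.fourier f (ω / (2 * Real.pi)) := by
  rw [Real.fourier_real_eq_integral_exp_smul, angularFourier]
  congr 1 with t
  rw [smul_eq_mul]
  congr 2
  push_cast
  field_simp

theorem angularFourier_convolution {f g : ℝ → ℂ} (hf : Integrable f) (hg : Integrable g)
    (ω : ℝ) :
    angularFourier (f ⋆[ContinuousLinearMap.mul ℂ ℂ] g) ω =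
      angularFourier f ω * angularFourier g ω := by
  simp only [angularFourier_eq_fourier]
  exact Real.fourier_mul_convolution_eq hf hg _

def causalExpKernel (c : ℂ) : ℝ → ℂ :=
  Set.indicator (Set.Ici 0) fun t => cexp (-c * t)

variable {c : ℂ}

theorem integrable_causalExpKernel (hc : 0 < c.re) : Integrable (causalExpKernel c) := by
  rw [causalExpKernel, integrable_indicator_iff measurableSet_Ici, IntegrableOn,
    Measure.restrict_congr_set Ioi_ae_eq_Ici.symm]
  exact integrableOn_exp_mul_complex_Ioi (a := -c) (by simpa) 0

theorem angularFourier_causalExpKernel (hc : 0 < c.re) (ω : ℝ) :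
    angularFourier (causalExpKernel c) ω = (c + I * ω)⁻¹ := by
  have hcω : 0 < (c + I * ω).re := by simpa using hc
  calc angularFourier (causalExpKernel c) ω
      = ∫ t : ℝ in Set.Ici 0, cexp (-(c + I * ω) * t) := by
        rw [angularFourier, ← integral_indicator measurableSet_Ici]
        congr 1 with t
        by_cases ht : 0 ≤ t
        · simp [causalExpKernel, ht, ← Complex.exp_add]
          ring_nf
        · simp [causalExpKernel, ht]
    _ = (c + I * ω)⁻¹ := by
        rw [integral_Ici_eq_integral_Ioi, integral_exp_mul_complex_Ioi (by simpa using hcω),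
          neg_div_neg_eq, ofReal_zero, mul_zero, Complex.exp_zero, one_div]

theorem angularFourier_sub {f g : ℝ → ℂ} (hf : Integrable f) (hg : Integrable g) (ω : ℝ) :
    angularFourier (f - g) ω = angularFourier f ω - angularFourier g ω := by
  have hmul : ∀ {h : ℝ → ℂ}, Integrable h → Integrable fun t : ℝ => cexp (-(I * ω * t)) * h t :=
    fun hh => hh.bdd_mul (c := 1) (by fun_prop)
      (.of_forall fun t => by simp [Complex.norm_exp])
  simp only [angularFourier, Pi.sub_apply, mul_sub]
  exact integral_sub (hmul hf) (hmul hg)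

theorem angularFourier_const_mul (a : ℂ) (f : ℝ → ℂ) (ω : ℝ) :
    angularFourier (fun t => a * f t) ω = a * angularFourier f ω := by
  simp only [angularFourier, ← integral_const_mul]
  congr 1 with t
  ring

theorem setIntegral_Iic_eq_convolution_causalExpKernel (f : ℝ → ℂ) (t : ℝ) :
    ∫ r in Set.Iic t, cexp (-c * (t - r)) * f r =
      (f ⋆[ContinuousLinearMap.mul ℂ ℂ] causalExpKernel c) t := by
  rw [convolution_def, ← integral_indicator measurableSet_Iic]
  congr 1 with r
  by_cases hr : r ≤ t
  · simp [causalExpKernel, hr, mul_comm]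
  · simp [causalExpKernel, hr]

end

theorem stmt_14 (κ₁ κ₂ : ℝ) (h₁ : 0 < κ₁) (h₂ : 0 < κ₂) (ξ : ℝ → ℂ) (hξ : Integrable ξ)
    (ν₁ ν₂ : ℝ → ℂ)
    (hν₁ : ∀ t : ℝ, ν₁ t = ξ t - (κ₁ : ℂ) *
      ∫ r in Set.Iic t,
        Complex.exp (-(((κ₁ : ℂ) + (κ₂ : ℂ)) / 2) * ((t : ℂ) - (r : ℂ))) * ξ r)
    (hν₂ : ∀ t : ℝ, ν₂ t = -(Real.sqrt (κ₁ * κ₂) : ℂ) *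
      ∫ r in Set.Iic t,
        Complex.exp (-(((κ₁ : ℂ) + (κ₂ : ℂ)) / 2) * ((t : ℂ) - (r : ℂ))) * ξ r) :
    Integrable ν₁ ∧ Integrable ν₂ ∧
    (∀ ω : ℝ, (∫ t : ℝ, Complex.exp (-(Complex.I * (ω : ℂ) * (t : ℂ))) * ν₁ t)
      = ((Complex.I * (ω : ℂ) - ((κ₁ : ℂ) - (κ₂ : ℂ)) / 2) /
          (Complex.I * (ω : ℂ) + ((κ₁ : ℂ) + (κ₂ : ℂ)) / 2)) *
        ∫ t : ℝ, Complex.exp (-(Complex.I * (ω : ℂ) * (t : ℂ))) * ξ t) ∧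
    (∀ ω : ℝ, (∫ t : ℝ, Complex.exp (-(Complex.I * (ω : ℂ) * (t : ℂ))) * ν₂ t)
      = (-(Real.sqrt (κ₁ * κ₂) : ℂ) /
          (Complex.I * (ω : ℂ) + ((κ₁ : ℂ) + (κ₂ : ℂ)) / 2)) *
        ∫ t : ℝ, Complex.exp (-(Complex.I * (ω : ℂ) * (t : ℂ))) * ξ t) := by
  set c : ℂ := ((κ₁ : ℂ) + (κ₂ : ℂ)) / 2
  have hc : 0 < c.re := by simp [c]; positivity
  set F := ξ ⋆[ContinuousLinearMap.mul ℂ ℂ] causalExpKernel c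
  have hF : Integrable F := hξ.integrable_convolution _ (integrable_causalExpKernel hc)
  have hν₁' : ν₁ = ξ - fun t => (κ₁ : ℂ) * F t := funext fun t => by
    rw [hν₁, setIntegral_Iic_eq_convolution_causalExpKernel]; rfl
  have hν₂' : ν₂ = fun t => -(Real.sqrt (κ₁ * κ₂) : ℂ) * F t := funext fun t => by
    rw [hν₂, setIntegral_Iic_eq_convolution_causalExpKernel]
  have hFω (ω : ℝ) : angularFourier F ω = (c + I * ω)⁻¹ * angularFourier ξ ω := by
    rw [angularFourier_convolution hξ (integrable_causalExpKernel hc),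
      angularFourier_causalExpKernel hc, mul_comm]
  have hden (ω : ℝ) : c + I * ω ≠ 0 := 
    ne_of_apply_ne re (by simpa using hc.ne')
  refine ⟨hν₁' ▸ hξ.sub (hF.const_mul _), hν₂' ▸ hF.const_mul _, fun ω => ?_, fun ω => ?_⟩
  · change angularFourier ν₁ ω = _ * angularFourier ξ ω
    rw [hν₁', angularFourier_sub hξ (hF.const_mul _), angularFourier_const_mul, hFω]
    rw [add_comm (I * ω)]
    field_simp [hden ω]
    simp only [c]
    ring
  · change angularFourier ν₂ ω = _ * angularFourier ξ ω
    rw [hν₂', angularFourier_const_mul, hFω, add_comm (I * ω), div_eq_mul_inv]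
    ring
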